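/- Deductive ASPIC⊖ is non-trivial under preferred semantics: for the two argumentation systems AS₁ (with defeasible rules ⇒φ₀, ..., ⇒φ_n over a nonempty atom set Γ = {φ₀,...,φ_n} and no axioms) and AS₂ (with defeasible rules φ₀⇒φ₀, ..., φ_n⇒φ_n over the same atoms, no axioms), which are over the same atoms, the restricted preferred conclusion sets differ: 𝒞_pr(AS₁)|_Γ ≠ 𝒞_pr(AS₂)|_Γ. -/

import Mathlib

namespace JS

inductive Lab : Type
  | IN | OUT | UNDEC
deriving DecidableEq

structure JSBAF (A : Type) where
  att : A → A → Prop
  supp : Set A → A → Prop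
  pref : A → A → Prop

variable {A : Type}

/-- Strict arguments: supported by the empty set or only by strict arguments. -/
inductive Strict (J : JSBAF A) : A → Prop
  | mk (S : Set A) (a : A) (h : J.supp S a) (hS : ∀ b ∈ S, Strict J b) : Strict J a

/-- Structural restrictions on JSBAFs. -/
structure Restr (J : JSBAF A) : Prop where
  finSupp : ∀ S b, J.supp S b → S.Finite
  uniqSupp : ∀ S S' b, J.supp S b → J.supp S' b → S = S'
  acyc : ∀ a, ¬ Relation.TransGen (fun x y => ∃ S, J.supp S y ∧ x ∈ S) a a
  strictUnatt : ∀ a b, Strict J b → ¬ J.att a b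
  prefRefl : ∀ a, J.pref a a
  prefTrans : ∀ a b c, J.pref a b → J.pref b c → J.pref a c
  prefTotal : ∀ a b, J.pref a b ∨ J.pref b a
  strictEq : ∀ a b, Strict J a → Strict J b → J.pref a b
  strictTop : ∀ a b, ¬ Strict J a → Strict J b → J.pref a b ∧ ¬ J.pref b a

def inL (L : A → Lab) : Set A := {a | L a = Lab.IN}
def outL (L : A → Lab) : Set A := {a | L a = Lab.OUT}
def undecL (L : A → Lab) : Set A := {a | L a = Lab.UNDEC}

/-- Definition 2, item 1: legally IN. -/
def legallyIn (J : JSBAF A) (L : A → Lab) (a : A) : Prop :=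
  (∀ b, J.att b a → L b = Lab.OUT) ∧
  ∀ S c, J.supp S c → a ∈ S → (∀ b ∈ S, b ≠ a → J.pref a b) →
    (L c = Lab.IN ∨
     (L c = Lab.UNDEC ∧ ∃ b ∈ S, b ≠ a ∧ (L b = Lab.OUT ∨ L b = Lab.UNDEC)) ∨
     (L c = Lab.OUT ∧
       ((∃ b ∈ S, b ≠ a ∧ L b = Lab.OUT) ∨
        (∃ b₁ ∈ S, ∃ b₂ ∈ S, b₁ ≠ a ∧ b₂ ≠ a ∧ b₁ ≠ b₂ ∧
          L b₁ = Lab.UNDEC ∧ L b₂ = Lab.UNDEC))))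

/-- Definition 2, item 2: legally OUT. -/
def legallyOut (J : JSBAF A) (L : A → Lab) (a : A) : Prop :=
  (∃ b, J.att b a ∧ L b = Lab.IN) ∨
  (∃ (n : ℕ) (S : ℕ → Set A) (b : ℕ → A),
    (∀ i ≤ n, J.supp (S i) (b i)) ∧
    (∀ i < n, b i ∈ S (i + 1)) ∧
    a ∈ S 0 ∧
    (∀ d ∈ S 0, d ≠ a → L d = Lab.IN) ∧
    (∃ c, J.att c (b n) ∧ L c = Lab.IN) ∧
    (∀ i ≤ n, L (b i) = Lab.OUT) ∧
    (∀ i, 1 ≤ i → i ≤ n → ∀ d ∈ S i, d ≠ b (i - 1) → L d = Lab.IN) ∧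
    (∀ d ∈ S 0, d ≠ a → J.pref a d))

/-- Admissible labelings. -/
def Admissible (J : JSBAF A) (L : A → Lab) : Prop :=
  (∀ a, L a = Lab.IN → legallyIn J L a) ∧
  (∀ a, L a = Lab.OUT ↔ legallyOut J L a) ∧
  (∀ a, Strict J a → L a = Lab.IN)

/-- Preferred labelings: maximal admissible w.r.t. inclusion of IN-sets. -/
def Preferred (J : JSBAF A) (L : A → Lab) : Prop :=
  Admissible J L ∧ ∀ L', Admissible J L' → ¬ (inL L ⊂ inL L')

/-- The iterated OUT-sets of the SIM labeling. -/
def simO (J : JSBAF A) : ℕ → Set A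
  | 0 => {a | ∃ b, Strict J b ∧ J.att b a}
  | n + 1 => simO J n ∪
      {a | ∃ S c, J.supp S c ∧ a ∈ S ∧ c ∈ simO J n ∧ ∀ d ∈ S, d ≠ a → Strict J d}

def simIn (J : JSBAF A) : Set A := {a | Strict J a}
def simOut (J : JSBAF A) : Set A := ⋃ n, simO J n

open Classical in
/-- The strict-including-minimal labeling. -/
noncomputable def SIM (J : JSBAF A) : A → Lab := fun a =>
  if Strict J a then Lab.IN else if a ∈ simOut J then Lab.OUT else Lab.UNDEC

/-- The order on labelings. -/
def leL (L₁ L₂ : A → Lab) : Prop := inL L₁ ⊆ inL L₂ ∧ outL L₁ ⊆ outL L₂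

end JS
namespace ASPIC

/-- An underlying logical language: formulas, atoms, interpretations, a classical
negation and conjunction, and the interpolation-style assumption on syntactically
disjoint sets of formulas. -/
structure Logic where
  F : Type
  Atom : Type
  atoms : F → Set Atom
  I : Type
  inhab : Nonempty I
  Models : I → F → Prop
  neg : F → F
  conj : F → F → F
  neg_spec : ∀ i φ, Models i (neg φ) ↔ ¬ Models i φ
  conj_spec : ∀ i φ ψ, Models i (conj φ ψ) ↔ (Models i φ ∧ Models i ψ)
  atoms_neg : ∀ φ, atoms (neg φ) = atoms φ
  atoms_conj : ∀ φ ψ, atoms (conj φ ψ) = atoms φ ∪ atoms ψ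
  interp : ∀ Γ Δ : Set F, (∀ φ ∈ Γ, ∀ ψ ∈ Δ, atoms φ ∩ atoms ψ = ∅) →
    (∃ i, ∀ φ ∈ Γ, Models i φ) → (∃ i, ∀ ψ ∈ Δ, Models i ψ) →
    (∃ i, (∀ φ ∈ Γ, Models i φ) ∧ (∀ ψ ∈ Δ, Models i ψ))

/-- The model-based consequence relation ⊨_C. -/
def Conseq (L : Logic) (Γ : Set L.F) (φ : L.F) : Prop :=
  ∀ i, (∀ ψ ∈ Γ, L.Models i ψ) → L.Models i φ

/-- φ = −ψ: one formula is the negation of the other. -/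
def negOf (L : Logic) (φ ψ : L.F) : Prop := φ = L.neg ψ ∨ ψ = L.neg φ

/-- Conjunction of a nonempty list of formulas: conjL L φ [ψ₁,…] = φ ∧ ψ₁ ∧ … . -/
def conjL (L : Logic) : L.F → List L.F → L.F
  | φ, [] => φ
  | φ, ψ :: l => L.conj φ (conjL L ψ l)

/-- A (defeasible) rule: antecedents and conclusion. -/
abbrev Rule (L : Logic) := List L.F × L.F

/-- An argumentation system of Deductive ASPIC⊖: satisfiable axioms, defeasible rules,
a (partial) naming function and a total preorder on defeasible rules.  The strict rules
are the axiomatic rules together with all consequence-based rules. -/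
structure ASys (L : Logic) where
  AX : Set L.F
  AX_sat : ∃ i, ∀ φ ∈ AX, L.Models i φ
  Rd : Set (Rule L)
  name : Rule L → Option L.F
  rpref : Rule L → Rule L → Prop
  rpref_refl : ∀ r, rpref r r
  rpref_trans : ∀ r s t, rpref r s → rpref s t → rpref r t
  rpref_total : ∀ r s, rpref r s ∨ rpref s r

/-- Top-rule kinds: axiomatic, consequence-based strict, defeasible. -/
inductive RK : Type
  | ax | cb | df
deriving DecidableEq

/-- Argument trees (with the kind of the top rule and the conclusion recorded). -/
inductive Arg (L : Logic) : Type
  | node (k : RK) (subs : List (Arg L)) (concl : L.F)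

def Arg.concl {L : Logic} : Arg L → L.F
  | .node _ _ φ => φ

def Arg.subs {L : Logic} : Arg L → List (Arg L)
  | .node _ s _ => s

def Arg.kind {L : Logic} : Arg L → RK
  | .node k _ _ => k

/-- Well-formed arguments of an argumentation system. -/
inductive Wf (L : Logic) (as : ASys L) : Arg L → Prop
  | ax (φ : L.F) (h : φ ∈ as.AX) : Wf L as (.node .ax [] φ)
  | cb (subs : List (Arg L)) (φ : L.F) (hs : ∀ a ∈ subs, Wf L as a)
      (h : Conseq L {ψ | ∃ a ∈ subs, Arg.concl a = ψ} φ) : Wf L as (.node .cb subs φ)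
  | df (subs : List (Arg L)) (φ : L.F) (hs : ∀ a ∈ subs, Wf L as a)
      (h : (subs.map Arg.concl, φ) ∈ as.Rd) : Wf L as (.node .df subs φ)

/-- Sub-argument relation: `Sub a b` means a is a sub-argument of b. -/
inductive Sub (L : Logic) : Arg L → Arg L → Prop
  | refl (a : Arg L) : Sub L a a
  | step (a b : Arg L) (k : RK) (subs : List (Arg L)) (φ : L.F)
      (hb : b ∈ subs) (h : Sub L a b) : Sub L a (.node k subs φ)

/-- Conclusions of the sub-arguments of a. -/
def SubC (L : Logic) (a : Arg L) : Set L.F := {φ | ∃ b, Sub L b a ∧ Arg.concl b = φ}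

/-- Axiomatic and defeasible sub-arguments. -/
def ADSub (L : Logic) (a : Arg L) : Set (Arg L) := {b | Sub L b a ∧ Arg.kind b ≠ RK.cb}

/-- Conclusions of the axiomatic and defeasible sub-arguments. -/
def ADSubC (L : Logic) (a : Arg L) : Set L.F :=
  {φ | ∃ b, Sub L b a ∧ Arg.kind b ≠ RK.cb ∧ Arg.concl b = φ}

/-- Defeasible rules used in an argument. -/
def DR (L : Logic) (a : Arg L) : Set (Rule L) :=
  {r | ∃ subs, Sub L (Arg.node RK.df subs r.2) a ∧ r.1 = subs.map Arg.concl}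

/-- Strict arguments: no defeasible rules used. -/
def IsStrictArg (L : Logic) (a : Arg L) : Prop := DR L a = ∅

/-- Elitist weakest-link lifting of the rule preorder to arguments (a ⪯_ewl b). -/
def ewl (L : Logic) (as : ASys L) (a b : Arg L) : Prop :=
  (DR L a = ∅ ∧ DR L b = ∅) ∨ ∃ ra ∈ DR L a, ∀ rb ∈ DR L b, as.rpref ra rb

/-- a undercuts b: the conclusion of a is the negation of the name of a defeasible rule
used in b. -/
def Undercuts (L : Logic) (as : ASys L) (a b : Arg L) : Prop :=
  ∃ subs φ, Sub L (Arg.node RK.df subs φ) b ∧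
    ∃ nm, as.name (subs.map Arg.concl, φ) = some nm ∧ negOf L (Arg.concl a) nm

/-- a gen-rebuts b: b is defeasible and the conclusion of a is the negation of a conjunction
of conclusions of sub-arguments of b. -/
def GenRebuts (L : Logic) (a b : Arg L) : Prop :=
  DR L b ≠ ∅ ∧ ∃ (φ : L.F) (l : List L.F),
    (∀ χ ∈ φ :: l, χ ∈ SubC L b) ∧ Arg.concl a = L.neg (conjL L φ l)

/-- a defeats b: a undercuts b, or a gen-rebuts b and a is not strictly weaker than b. -/
def Defeats (L : Logic) (as : ASys L) (a b : Arg L) : Prop :=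
  Undercuts L as a b ∨
    (GenRebuts L a b ∧ ¬ (ewl L as a b ∧ ¬ ewl L as b a))

/-- The strict rules of an argumentation system: axiomatic or consequence-based. -/
def StrictRule (L : Logic) (as : ASys L) (r : Rule L) : Prop :=
  (r.1 = [] ∧ r.2 ∈ as.AX) ∨ Conseq L {φ | φ ∈ r.1} r.2

end ASPIC

namespace ASPIC

/-- The well-formed arguments of an argumentation system. -/
def WfArg (L : Logic) (as : ASys L) : Type := {a : Arg L // Wf L as a}

/-- The JSBAF corresponding to an argumentation system: attacks are defeats, supports are
applications of strict rules, preferences are the elitist weakest-link lifting. -/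
def toJ (L : Logic) (as : ASys L) : JS.JSBAF (WfArg L as) where
  att a b := Defeats L as a.1 b.1
  supp S b := (Arg.kind b.1 = RK.ax ∨ Arg.kind b.1 = RK.cb) ∧
    S = {a : WfArg L as | a.1 ∈ Arg.subs b.1}
  pref a b := ewl L as a.1 b.1

/-- The conclusions of the IN-arguments of a labeling. -/
def concls (L : Logic) (as : ASys L) (Lb : WfArg L as → JS.Lab) : Set L.F :=
  {φ | ∃ a : WfArg L as, Lb a = JS.Lab.IN ∧ Arg.concl a.1 = φ}

/-- The AS is consistent: no two strict arguments have contradictory conclusions. -/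
def ASConsistent (L : Logic) (as : ASys L) : Prop :=
  ¬ ∃ a b : Arg L, Wf L as a ∧ Wf L as b ∧ DR L a = ∅ ∧ DR L b = ∅ ∧
      negOf L (Arg.concl a) (Arg.concl b)

end ASPIC

namespace ASPIC

/-- The preferred conclusion sets of an argumentation system. -/
def Cpr (L : Logic) (as : ASys L) : Set (Set L.F) :=
  {Γ | ∃ Lb : WfArg L as → JS.Lab, JS.Preferred (toJ L as) Lb ∧ Γ = concls L as Lb}

/-- Elementwise restriction of a set of conclusion sets to formulas over a given atom set. -/
def restrict (L : Logic) (C : Set (Set L.F)) (Δ : Set L.Atom) : Set (Set L.F) :=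
  {Γ' | ∃ Γ ∈ C, Γ' = {φ ∈ Γ | L.atoms φ ⊆ Δ}}

end ASPIC

/-!
In AS₁ the atoms of Γ are jointly satisfiable, so a single interpretation satisfies every
conclusion of every argument; no conclusion is then the negation of a conjunction of
conclusions, and with no rule names there are no defeats at all. Hence labeling every
argument IN is preferred, and through the argument `⇒ φ₀` its conclusions contain φ₀. In AS₂ every
rule `φ ⇒ φ` holds in every interpretation, so every conclusion is valid, while φ₀ is not
a tautology: no preferred conclusion set of AS₂ contains φ₀.
-/

namespace JS

variable {A : Type}

theorem preferred_const_in_of_forall_not_att (J : JSBAF A) (h : ∀ a b, ¬ J.att a b) :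
    Preferred J (fun _ => Lab.IN) := by
  refine ⟨⟨fun a _ => ⟨fun b hb => absurd hb (h b a), fun _ _ _ _ _ => Or.inl rfl⟩,
    fun a => ⟨nofun, ?_⟩, fun _ _ => rfl⟩, fun _ _ hss => hss.not_subset fun _ _ => rfl⟩
  rintro (⟨b, hb, -⟩ | ⟨n, -, b, -, -, -, -, ⟨c, hc, -⟩, -⟩)
  · exact absurd hb (h b a)
  · exact absurd hc (h c (b n))

end JS

namespace ASPIC

def IsModel (L : Logic) (as : ASys L) (i : L.I) : Prop :=
  (∀ φ ∈ as.AX, L.Models i φ) ∧ ∀ r ∈ as.Rd, (∀ ψ ∈ r.1, L.Models i ψ) → L.Models i r.2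

theorem Wf.of_sub {L : Logic} {as : ASys L} {a b : Arg L} (h : Sub L b a) (ha : Wf L as a) :
    Wf L as b := by
  induction h with
  | refl => exact ha
  | step d k subs φ hmem _ ih =>
    cases ha with
    | ax => exact absurd hmem List.not_mem_nil
    | cb _ _ hs => exact ih (hs _ hmem)
    | df _ _ hs => exact ih (hs _ hmem)

theorem models_concl_of_wf {L : Logic} {as : ASys L} {i : L.I} (hi : IsModel L as i)
    {a : Arg L} (ha : Wf L as a) : L.Models i (Arg.concl a) := by
  induction ha with
  | ax φ h => exact hi.1 φ h
  | cb _ _ _ h ih => exact h i (by rintro ψ ⟨b, hb, rfl⟩; exact ih b hb)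
  | df _ _ _ h ih =>
    refine hi.2 _ h fun ψ hψ => ?_
    obtain ⟨b, hb, rfl⟩ := List.mem_map.mp hψ
    exact ih b hb

theorem models_of_mem_concls {L : Logic} {as : ASys L} {i : L.I} (hi : IsModel L as i)
    {Lb : WfArg L as → JS.Lab} {φ : L.F} (hφ : φ ∈ concls L as Lb) : L.Models i φ := by
  obtain ⟨a, -, rfl⟩ := hφ
  exact models_concl_of_wf hi a.2

theorem models_conjL (L : Logic) (i : L.I) (φ : L.F) (l : List L.F)
    (h : ∀ χ ∈ φ :: l, L.Models i χ) : L.Models i (conjL L φ l) := by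
  induction l generalizing φ with
  | nil => exact h φ List.mem_cons_self
  | cons ψ l ih =>
    rw [conjL, L.conj_spec]
    exact ⟨h φ List.mem_cons_self, ih ψ fun χ hχ => h χ (List.mem_cons_of_mem φ hχ)⟩

/-- A model makes every conclusion true, so none is the negation of a conjunction of
conclusions. -/
theorem not_defeats_of_isModel {L : Logic} {as : ASys L} {i : L.I} (hi : IsModel L as i)
    (hname : as.name = fun _ => none) (a b : WfArg L as) : ¬ Defeats L as a.1 b.1 := by
  rintro (⟨_, _, _, _, hnm, -⟩ | ⟨⟨-, φ, l, hsub, hconcl⟩, -⟩)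
  · simp [hname] at hnm
  · have ha := models_concl_of_wf hi a.2
    rw [hconcl, L.neg_spec] at ha
    refine ha (models_conjL L i φ l fun χ hχ => ?_)
    obtain ⟨c, hc, rfl⟩ := hsub χ hχ
    exact models_concl_of_wf hi (Wf.of_sub hc b.2)

theorem exists_models_atoms (L : Logic) (atomF : L.Atom → L.F)
    (hatomF : ∀ p, L.atoms (atomF p) = {p}) (hsat : ∀ p, ∃ i, L.Models i (atomF p))
    (ps : Finset L.Atom) : ∃ i, ∀ p ∈ ps, L.Models i (atomF p) := by
  classical
  induction ps using Finset.induction with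
  | empty => exact L.inhab.elim fun i => ⟨i, by simp⟩
  | @insert p s hp ih =>
    obtain ⟨i, hi⟩ := ih
    obtain ⟨j, hj⟩ := hsat p
    have hdisj : ∀ φ ∈ atomF '' s, ∀ ψ ∈ ({atomF p} : Set L.F), L.atoms φ ∩ L.atoms ψ = ∅ := by
      rintro _ ⟨q, hq, rfl⟩ _ rfl
      rw [hatomF, hatomF, Set.singleton_inter_eq_empty, Set.mem_singleton_iff]
      exact fun hqp => hp (hqp ▸ hq)
    obtain ⟨k, hks, hkp⟩ := L.interp _ _ hdisj
      ⟨i, by rintro _ ⟨q, hq, rfl⟩; exact hi q hq⟩ ⟨j, by rintro _ rfl; exact hj⟩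
    refine ⟨k, fun q hq => ?_⟩
    rcases Finset.mem_insert.mp hq with rfl | hq
    · exact hkp _ rfl
    · exact hks _ ⟨q, hq, rfl⟩

theorem restrict_ne_of_mem (L : Logic) {C C' : Set (Set L.F)} {Δ : Set L.Atom} {φ : L.F}
    (hC : ∃ Γ ∈ C, φ ∈ Γ) (hφ : L.atoms φ ⊆ Δ) (hC' : ∀ Γ ∈ C', φ ∉ Γ) :
    restrict L C Δ ≠ restrict L C' Δ := by
  obtain ⟨Γ, hΓ, hφΓ⟩ := hC
  intro heq
  have hmem : {ψ ∈ Γ | L.atoms ψ ⊆ Δ} ∈ restrict L C Δ := ⟨Γ, hΓ, rfl⟩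
  rw [heq] at hmem
  obtain ⟨Γ', hΓ', hres⟩ := hmem
  exact hC' Γ' hΓ' (Set.ext_iff.mp hres φ |>.mp ⟨hφΓ, hφ⟩).1

end ASPIC

open ASPIC in
theorem nontrivial_preferred_general (L : Logic)
    (atomF : L.Atom → L.F)
    (hatomF : ∀ p, L.atoms (atomF p) = {p})
    (hsat : ∀ p, ∃ i, L.Models i (atomF p))
    (hnontaut : ∀ p, ∃ i, ¬ L.Models i (atomF p))
    (ps : Finset L.Atom) (hne : ps.Nonempty)
    (as₁ as₂ : ASys L)
    (h1AX : as₁.AX = ∅)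
    (h1Rd : as₁.Rd = {r | ∃ p ∈ ps, r = ([], atomF p)})
    (h1nm : as₁.name = fun _ => none)
    (h2AX : as₂.AX = ∅)
    (h2Rd : as₂.Rd = {r | ∃ p ∈ ps, r = ([atomF p], atomF p)}) :
    restrict L (Cpr L as₁) (↑ps) ≠ restrict L (Cpr L as₂) (↑ps) := by
  obtain ⟨p₀, hp₀⟩ := hne
  obtain ⟨i, hi⟩ := exists_models_atoms L atomF hatomF hsat ps
  obtain ⟨j, hj⟩ := hnontaut p₀
  have hmodel₁ : IsModel L as₁ i := by
    refine ⟨by simp [h1AX], ?_⟩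
    rw [h1Rd]
    rintro _ ⟨p, hp, rfl⟩ -
    exact hi p hp
  have hmodel₂ : IsModel L as₂ j := by
    refine ⟨by simp [h2AX], ?_⟩
    rw [h2Rd]
    rintro _ ⟨p, -, rfl⟩ h
    exact h _ List.mem_cons_self
  have hpref := JS.preferred_const_in_of_forall_not_att (toJ L as₁)
    (not_defeats_of_isModel hmodel₁ h1nm)
  have hwf : Wf L as₁ (Arg.node RK.df [] (atomF p₀)) :=
    Wf.df [] _ nofun (h1Rd ▸ ⟨p₀, hp₀, rfl⟩)
  refine restrict_ne_of_mem L ⟨_, ⟨_, hpref, rfl⟩, ⟨⟨_, hwf⟩, rfl, rfl⟩⟩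
    (by simpa [Arg.concl, hatomF] using hp₀) ?_
  rintro _ ⟨Lb, -, rfl⟩ hφ
  exact hj (models_of_mem_concls hmodel₂ hφ)

open ASPIC in
/-- Deductive ASPIC⊖ is non-trivial under preferred semantics: for a nonempty
finite set of atoms ps, the argumentation system AS₁ with defeasible rules ⇒φ_p (p ∈ ps) and no
axioms, and the argumentation system AS₂ with defeasible rules φ_p ⇒ φ_p (p ∈ ps) and no axioms,
have different preferred conclusion sets when restricted to ps. -/
theorem nontrivial_preferred (L : Logic)
    (atomF : L.Atom → L.F)
    (hatomF : ∀ p, L.atoms (atomF p) = {p})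
    (hsat : ∀ p, ∃ i, L.Models i (atomF p))
    (hnontaut : ∀ p, ∃ i, ¬ L.Models i (atomF p))
    (ps : Finset L.Atom) (hne : ps.Nonempty)
    (as₁ as₂ : ASys L)
    (h1AX : as₁.AX = ∅)
    (h1Rd : as₁.Rd = {r | ∃ p ∈ ps, r = ([], atomF p)})
    (h1nm : as₁.name = fun _ => none)
    (h2AX : as₂.AX = ∅)
    (h2Rd : as₂.Rd = {r | ∃ p ∈ ps, r = ([atomF p], atomF p)})
    (h2nm : as₂.name = fun _ => none) :
    restrict L (Cpr L as₁) (↑ps) ≠ restrict L (Cpr L as₂) (↑ps) :=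
  nontrivial_preferred_general L atomF hatomF hsat hnontaut ps hne as₁ as₂ h1AX h1Rd h1nm h2AX h2Rd
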